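/- Let π̂ = Σ_{j=1}^M π̂_j δ(x̂_{1,j},…,x̂_{N,j}) be an optimal plan minimizing Φ over Π(μ¹,…,μ^N), let m̂_j = Σ_{i=1}^N λ_i x̂_{i,j}, and let ν̂ = (M_λ)_# π̂ = Σ_j π̂_j δ(m̂_j). Then for every i = 1,…,N, the two-marginal measure Σ_{j=1}^M π̂_j δ(m̂_j, x̂_{i,j}) is an optimal coupling between ν̂ and μ^i for the squared Euclidean cost, i.e. its cost equals W₂²(ν̂, μ^i). -/

import Mathlib

open MeasureTheory
open scoped ENNReal

noncomputable section

/-- Points of the `d`-dimensional Euclidean space. -/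
abbrev Pt (d : ℕ) := EuclideanSpace ℝ (Fin d)

/-- A measure is finitely supported if it vanishes outside a finite set. -/
def FinitelySupported {α : Type*} [MeasurableSpace α] (μ : Measure α) : Prop :=
  ∃ s : Finset α, μ ((s : Set α)ᶜ) = 0

/-- `λ` lies in the open probability simplex. -/
def InSimplex {N : ℕ} (l : Fin N → ℝ) : Prop :=
  (∀ i, 0 < l i) ∧ ∑ i, l i = 1

/-- `π` is a multi-marginal transport plan with marginals `μ i`. -/
def IsPlan {d N : ℕ} (μ : Fin N → Measure (Pt d)) (π : Measure (Fin N → Pt d)) : Prop :=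
  IsProbabilityMeasure π ∧ ∀ i, π.map (fun x => x i) = μ i

/-- The multi-marginal optimal transport cost `Φ(π)`. -/
def MOT {d N : ℕ} (l : Fin N → ℝ) (π : Measure (Fin N → Pt d)) : ℝ≥0∞ :=
  ∫⁻ x, ∑ s : Fin N, ∑ t : Fin N,
    (if s < t then ENNReal.ofReal (l s * l t * ‖x s - x t‖ ^ 2) else 0) ∂π

/-- `π` is a coupling of `μ` and `ν`. -/
def IsCoupling {α : Type*} [MeasurableSpace α] (μ ν : Measure α) (π : Measure (α × α)) : Prop :=
  IsProbabilityMeasure π ∧ π.map Prod.fst = μ ∧ π.map Prod.snd = ν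

/-- The squared Wasserstein-2 distance: the optimal squared-Euclidean transport cost
over all couplings. -/
def W2sq {d : ℕ} (μ ν : Measure (Pt d)) : ℝ≥0∞ :=
  sInf { c : ℝ≥0∞ | ∃ π : Measure (Pt d × Pt d), IsCoupling μ ν π ∧
    c = ∫⁻ p, ENNReal.ofReal (‖p.1 - p.2‖ ^ 2) ∂π }

/-- The barycenter objective `Ψ(ν) = ∑ i λ i * W₂²(μ i, ν)`. -/
def Psi {d N : ℕ} (l : Fin N → ℝ) (μ : Fin N → Measure (Pt d)) (ν : Measure (Pt d)) : ℝ≥0∞ :=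
  ∑ i, ENNReal.ofReal (l i) * W2sq (μ i) ν

/-- The `λ`-weighted mean map `M_λ`. -/
def wmean {d N : ℕ} (l : Fin N → ℝ) (x : Fin N → Pt d) : Pt d :=
  ∑ i, l i • x i

/-- The support-as-atoms of a measure. -/
def msupport {α : Type*} [MeasurableSpace α] (μ : Measure α) : Set α :=
  {x | μ {x} ≠ 0}

/-!
The coupling in question is `γ = (M_λ, xᵢ)_# π̂`. Let `β` be any coupling of `ν̂ = (M_λ)_# π̂`
and `μⁱ`. Disintegrating `β` over its first marginal glues it to `π̂` along `M_λ`; replacing the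
`i`-th point of each tuple `x` by a point `y` drawn from `β` conditioned on `M_λ x` gives a plan
`π'` with the same marginals as `π̂`. Since `Φ(π) = ∫ Σₖ λₖ ‖xₖ - M_λ x‖² dπ` and the weighted
variance is at most `Σₖ λₖ ‖xₖ - a‖²` for every `a`, moving `xᵢ` to `y` raises the integrand
by at most `λᵢ (‖M_λ x - y‖² - ‖M_λ x - xᵢ‖²)`. So `Φ(π̂) ≤ Φ(π')` gives
`λᵢ cost(γ) ≤ λᵢ cost(β)`, and `Φ(π̂) < ∞` lets us cancel.
-/

open ProbabilityTheory

section WeightedVariance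

variable {ι E : Type*} [Fintype ι] [NormedAddCommGroup E] [InnerProductSpace ℝ E]
  {l : ι → ℝ}

theorem sum_mul_norm_sub_sq_eq (hl : ∑ k, l k = 1) (z : ι → E) (a : E) :
    ∑ k, l k * ‖z k - a‖ ^ 2
      = ∑ k, l k * ‖z k - ∑ j, l j • z j‖ ^ 2 + ‖∑ j, l j • z j - a‖ ^ 2 := by
  set m := ∑ j, l j • z j with hm
  have hcentered : ∑ k, l k * inner ℝ (z k - m) (m - a) = 0 := by
    simp_rw [← real_inner_smul_left, ← sum_inner, smul_sub, Finset.sum_sub_distrib,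
      ← Finset.sum_smul, hl, one_smul, ← hm, sub_self, inner_zero_left]
  have hexpand : ∀ k, l k * ‖z k - a‖ ^ 2
      = l k * ‖z k - m‖ ^ 2 + 2 * (l k * inner ℝ (z k - m) (m - a)) + l k * ‖m - a‖ ^ 2 := by
    intro k
    rw [← sub_add_sub_cancel (z k) m a, norm_add_sq_real]
    ring
  simp_rw [hexpand, Finset.sum_add_distrib, ← Finset.mul_sum, hcentered, ← Finset.sum_mul, hl]
  ring

theorem sum_sum_mul_mul_norm_sub_sq (hl : ∑ k, l k = 1) (z : ι → E) :
    ∑ s, ∑ t, l s * l t * ‖z s - z t‖ ^ 2 = 2 * ∑ k, l k * ‖z k - ∑ j, l j • z j‖ ^ 2 := by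
  have hrow : ∀ s, ∑ t, l s * l t * ‖z s - z t‖ ^ 2
      = l s * (∑ k, l k * ‖z k - ∑ j, l j • z j‖ ^ 2 + ‖z s - ∑ j, l j • z j‖ ^ 2) := by
    intro s
    rw [norm_sub_rev, ← sum_mul_norm_sub_sq_eq hl z (z s), Finset.mul_sum]
    refine Finset.sum_congr rfl fun t _ => ?_
    rw [norm_sub_rev]
    ring
  simp_rw [hrow, mul_add, Finset.sum_add_distrib, ← Finset.sum_mul, hl]
  ring

theorem sum_mul_norm_sub_sq_update_add_le [DecidableEq ι] (hl : ∑ k, l k = 1) (z : ι → E)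
    (i : ι) (y : E) :
    ∑ k, l k * ‖Function.update z i y k - ∑ j, l j • Function.update z i y j‖ ^ 2
        + l i * ‖∑ j, l j • z j - z i‖ ^ 2
      ≤ ∑ k, l k * ‖z k - ∑ j, l j • z j‖ ^ 2 + l i * ‖∑ j, l j • z j - y‖ ^ 2 := by
  set m := ∑ j, l j • z j
  have hvar : ∑ k, l k * ‖Function.update z i y k - ∑ j, l j • Function.update z i y j‖ ^ 2
      ≤ ∑ k, l k * ‖Function.update z i y k - m‖ ^ 2 := by
    rw [sum_mul_norm_sub_sq_eq hl _ m]
    exact le_add_of_nonneg_right (sq_nonneg _)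
  have hrest : ∑ k ∈ Finset.univ.erase i, l k * ‖Function.update z i y k - m‖ ^ 2
      = ∑ k ∈ Finset.univ.erase i, l k * ‖z k - m‖ ^ 2 :=
    Finset.sum_congr rfl fun k hk => by rw [Function.update_of_ne (Finset.ne_of_mem_erase hk)]
  have hsplit : ∀ w : ι → E, ∑ k, l k * ‖w k - m‖ ^ 2
      = l i * ‖w i - m‖ ^ 2 + ∑ k ∈ Finset.univ.erase i, l k * ‖w k - m‖ ^ 2 := fun w =>
    (Finset.add_sum_erase _ (fun k => l k * ‖w k - m‖ ^ 2) (Finset.mem_univ i)).symm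
  rw [hsplit, Function.update_self, hrest] at hvar
  rw [hsplit z, norm_sub_rev m, norm_sub_rev m]
  linarith

end WeightedVariance

theorem Finset.sum_sum_eq_two_nsmul_sum_sum_ite_lt {ι M : Type*} [Fintype ι] [LinearOrder ι]
    [AddCommMonoid M] (f : ι → ι → M) (hsymm : ∀ s t, f s t = f t s) (hdiag : ∀ s, f s s = 0) :
    ∑ s, ∑ t, f s t = 2 • ∑ s, ∑ t, if s < t then f s t else 0 := by
  have hsplit : ∀ s t, f s t = (if s < t then f s t else 0) + (if t < s then f t s else 0) := by
    intro s t
    rcases lt_trichotomy s t with h | rfl | h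
    · simp [h, h.not_gt]
    · simp [hdiag]
    · simp [h, h.not_gt, hsymm s t]
  rw [Finset.sum_congr rfl fun s _ => Finset.sum_congr rfl fun t _ => hsplit s t]
  simp_rw [Finset.sum_add_distrib]
  rw [Finset.sum_comm (f := fun s t => if t < s then f t s else 0), two_nsmul]

theorem sum_sum_ite_lt_mul_mul_norm_sub_sq {ι E : Type*} [Fintype ι] [LinearOrder ι]
    [NormedAddCommGroup E] [InnerProductSpace ℝ E] {l : ι → ℝ} (hl : ∑ k, l k = 1)
    (z : ι → E) :
    ∑ s, ∑ t, (if s < t then l s * l t * ‖z s - z t‖ ^ 2 else 0)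
      = ∑ k, l k * ‖z k - ∑ j, l j • z j‖ ^ 2 := by
  have h := Finset.sum_sum_eq_two_nsmul_sum_sum_ite_lt (fun s t => l s * l t * ‖z s - z t‖ ^ 2)
    (fun s t => by rw [norm_sub_rev]; ring) (fun s => by simp)
  rw [sum_sum_mul_mul_norm_sub_sq hl, two_nsmul, ← two_mul] at h
  linarith

theorem MeasureTheory.Measure.exists_fst_eq_map_prodMap_eq {X Y Z : Type*} [MeasurableSpace X]
    [MeasurableSpace Y] [MeasurableSpace Z] [StandardBorelSpace Z] [Nonempty Z]
    (π : Measure X) [SFinite π] {f : X → Y} (hf : Measurable f)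
    (β : Measure (Y × Z)) [IsFiniteMeasure β] (hβ : β.fst = π.map f) :
    ∃ ρ : Measure (X × Z), ρ.fst = π ∧ ρ.map (Prod.map f id) = β := by
  refine ⟨π ⊗ₘ β.condKernel.comap f hf, Measure.fst_compProd _ _, ?_⟩
  conv_rhs => rw [← β.disintegrate β.condKernel, hβ]
  ext s hs
  rw [Measure.map_apply (hf.prodMap measurable_id) hs, Measure.compProd_apply hs,
    Measure.compProd_apply (hf.prodMap measurable_id hs), lintegral_map _ hf]
  · rfl
  · exact Kernel.measurable_kernel_prodMk_left hs

section MultiMarginal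

variable {d N : ℕ} {l : Fin N → ℝ}

@[fun_prop]
theorem continuous_wmean : Continuous (wmean (d := d) l) := by
  unfold wmean
  fun_prop

theorem MOT_eq_lintegral (hl : InSimplex l) (π : Measure (Fin N → Pt d)) :
    MOT l π = ∫⁻ z, ENNReal.ofReal (∑ k, l k * ‖z k - wmean l z‖ ^ 2) ∂π := by
  refine lintegral_congr fun z => ?_
  have hnonneg : ∀ s t, 0 ≤ if s < t then l s * l t * ‖z s - z t‖ ^ 2 else 0 := fun s t => by
    split_ifs
    · exact mul_nonneg (mul_nonneg (hl.1 s).le (hl.1 t).le) (sq_nonneg _)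
    · exact le_rfl
  rw [wmean, ← sum_sum_ite_lt_mul_mul_norm_sub_sq hl.2,
    ENNReal.ofReal_sum_of_nonneg fun s _ => Finset.sum_nonneg fun t _ => hnonneg s t]
  refine Finset.sum_congr rfl fun s _ => ?_
  rw [ENNReal.ofReal_sum_of_nonneg fun t _ => hnonneg s t]
  refine Finset.sum_congr rfl fun t _ => ?_
  split_ifs <;> simp

theorem exists_isPlan_update_of_isCoupling {μ : Fin N → Measure (Pt d)}
    {π : Measure (Fin N → Pt d)} (hπ : IsPlan μ π) (i : Fin N) {β : Measure (Pt d × Pt d)}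
    (hβ : IsCoupling (π.map (wmean l)) (μ i) β) :
    ∃ ρ : Measure ((Fin N → Pt d) × Pt d), ρ.fst = π ∧ ρ.map (Prod.map (wmean l) id) = β ∧
      IsPlan μ (ρ.map fun p => Function.update p.1 i p.2) := by
  obtain ⟨hπprob, hπmarg⟩ := hπ
  obtain ⟨hβprob, hβfst, hβsnd⟩ := hβ
  obtain ⟨ρ, hρfst, hρmap⟩ :=
    Measure.exists_fst_eq_map_prodMap_eq π continuous_wmean.measurable β hβfst
  have hupd : Measurable fun p : (Fin N → Pt d) × Pt d => Function.update p.1 i p.2 := by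
    fun_prop
  have hρprob : IsProbabilityMeasure ρ := by
    rw [← Measure.isProbabilityMeasure_map_iff measurable_fst.aemeasurable]
    rwa [← Measure.fst, hρfst]
  refine ⟨ρ, hρfst, hρmap, Measure.isProbabilityMeasure_map hupd.aemeasurable, fun k => ?_⟩
  rw [Measure.map_map (measurable_pi_apply k) hupd]
  rcases eq_or_ne k i with rfl | hk
  · simp_rw [Function.comp_def, Function.update_self]
    rw [← hβsnd, ← hρmap, Measure.map_map measurable_snd
      (continuous_wmean.measurable.prodMap measurable_id)]
    rfl
  · simp_rw [Function.comp_def, Function.update_of_ne hk]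
    rw [← hπmarg k, ← hρfst, Measure.fst, Measure.map_map (measurable_pi_apply k) measurable_fst]
    rfl

theorem lintegral_norm_wmean_sub_sq_le_of_isCoupling (hl : InSimplex l)
    {μ : Fin N → Measure (Pt d)} {π : Measure (Fin N → Pt d)} (hπ : IsPlan μ π)
    (hfin : MOT l π ≠ ∞) (hopt : ∀ π', IsPlan μ π' → MOT l π ≤ MOT l π') (i : Fin N)
    {β : Measure (Pt d × Pt d)} (hβ : IsCoupling (π.map (wmean l)) (μ i) β) :
    ∫⁻ z, ENNReal.ofReal (‖wmean l z - z i‖ ^ 2) ∂π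
      ≤ ∫⁻ p, ENNReal.ofReal (‖p.1 - p.2‖ ^ 2) ∂β := by
  obtain ⟨ρ, hρfst, hρmap, hplan⟩ := exists_isPlan_update_of_isCoupling hπ i hβ
  set V : (Fin N → Pt d) → ℝ≥0∞ := fun z => ENNReal.ofReal (∑ k, l k * ‖z k - wmean l z‖ ^ 2)
  set c := ENNReal.ofReal (l i)
  have hV : Measurable V := by fun_prop
  have hupd : Measurable fun p : (Fin N → Pt d) × Pt d => Function.update p.1 i p.2 := by
    fun_prop
  have hvar : ∀ p : (Fin N → Pt d) × Pt d,
      V (Function.update p.1 i p.2) + c * ENNReal.ofReal (‖wmean l p.1 - p.1 i‖ ^ 2)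
        ≤ V p.1 + c * ENNReal.ofReal (‖wmean l p.1 - p.2‖ ^ 2) := by
    intro p
    have hli := (hl.1 i).le
    have hV0 : ∀ z : Fin N → Pt d, 0 ≤ ∑ k, l k * ‖z k - wmean l z‖ ^ 2 := fun z =>
      Finset.sum_nonneg fun k _ => mul_nonneg (hl.1 k).le (sq_nonneg _)
    simp only [V, c, ← ENNReal.ofReal_mul hli,
      ← ENNReal.ofReal_add (hV0 _) (mul_nonneg hli (sq_nonneg _))]
    exact ENNReal.ofReal_le_ofReal (sum_mul_norm_sub_sq_update_add_le hl.2 p.1 i p.2)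
  have hfst : ∀ g : (Fin N → Pt d) → ℝ≥0∞, Measurable g → ∫⁻ p, g p.1 ∂ρ = ∫⁻ z, g z ∂π :=
    fun g hg => by rw [← hρfst, Measure.fst, lintegral_map hg measurable_fst]
  have key : MOT l π + c * ∫⁻ z, ENNReal.ofReal (‖wmean l z - z i‖ ^ 2) ∂π
      ≤ MOT l π + c * ∫⁻ p, ENNReal.ofReal (‖p.1 - p.2‖ ^ 2) ∂β :=
    calc _ ≤ MOT l (ρ.map fun p => Function.update p.1 i p.2)
            + c * ∫⁻ z, ENNReal.ofReal (‖wmean l z - z i‖ ^ 2) ∂π := by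
          gcongr
          exact hopt _ hplan
      _ = ∫⁻ p, V (Function.update p.1 i p.2)
            + c * ENNReal.ofReal (‖wmean l p.1 - p.1 i‖ ^ 2) ∂ρ := by
          rw [lintegral_add_left (f := fun p : _ × Pt d => V (Function.update p.1 i p.2))
              (hV.comp hupd), lintegral_const_mul _ (by fun_prop), MOT_eq_lintegral hl,
            lintegral_map hV hupd,
            hfst (fun z => ENNReal.ofReal (‖wmean l z - z i‖ ^ 2)) (by fun_prop)]
      _ ≤ ∫⁻ p, V p.1 + c * ENNReal.ofReal (‖wmean l p.1 - p.2‖ ^ 2) ∂ρ := lintegral_mono hvar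
      _ = _ := by
          rw [lintegral_add_left (f := fun p : _ × Pt d => V p.1) (hV.comp measurable_fst),
            lintegral_const_mul _ (by fun_prop), hfst V hV, ← MOT_eq_lintegral hl, ← hρmap,
            lintegral_map (by fun_prop) (by fun_prop)]
          rfl
  have hc : c ≠ 0 := by simpa [c] using hl.1 i
  exact (ENNReal.mul_le_mul_iff_right hc ENNReal.ofReal_ne_top).1
    ((ENNReal.add_le_add_iff_left hfin).1 key)

theorem isCoupling_map_wmean_eval {μ : Fin N → Measure (Pt d)} {π : Measure (Fin N → Pt d)}
    (hπ : IsPlan μ π) (i : Fin N) :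
    IsCoupling (π.map (wmean l)) (μ i) (π.map fun z => (wmean l z, z i)) := by
  obtain ⟨hπprob, hπmarg⟩ := hπ
  have hmeas : Measurable fun z : Fin N → Pt d => (wmean l z, z i) := by fun_prop
  refine ⟨Measure.isProbabilityMeasure_map hmeas.aemeasurable, ?_, ?_⟩
  · rw [Measure.map_map measurable_fst hmeas]
    rfl
  · rw [Measure.map_map measurable_snd hmeas, ← hπmarg i]
    rfl

theorem lintegral_map_wmean_eval_eq_W2sq (hl : InSimplex l) {μ : Fin N → Measure (Pt d)}
    {π : Measure (Fin N → Pt d)} (hπ : IsPlan μ π) (hfin : MOT l π ≠ ∞)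
    (hopt : ∀ π', IsPlan μ π' → MOT l π ≤ MOT l π') (i : Fin N) :
    ∫⁻ p, ENNReal.ofReal (‖p.1 - p.2‖ ^ 2) ∂(π.map fun z => (wmean l z, z i))
      = W2sq (π.map (wmean l)) (μ i) := by
  rw [lintegral_map (by fun_prop) (by fun_prop)]
  refine le_antisymm (le_sInf ?_) (sInf_le ⟨_, isCoupling_map_wmean_eval hπ i, ?_⟩)
  · rintro _ ⟨β, hβ, rfl⟩
    exact lintegral_norm_wmean_sub_sq_le_of_isCoupling hl hπ hfin hopt i hβ
  · rw [lintegral_map (by fun_prop) (by fun_prop)]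

end MultiMarginal

theorem stmt7_general {d N M : ℕ} (μ : Fin N → Measure (Pt d))
    (l : Fin N → ℝ) (hl : InSimplex l)
    (w : Fin M → ℝ)
    (x : Fin M → Fin N → Pt d)
    (pihat : Measure (Fin N → Pt d))
    (hrep : pihat = ∑ j, ENNReal.ofReal (w j) • Measure.dirac (x j))
    (hplan : IsPlan μ pihat)
    (hopt : ∀ π, IsPlan μ π → MOT l pihat ≤ MOT l π) :
    ∀ i : Fin N,
      IsCoupling (pihat.map (wmean l)) (μ i)
        (∑ j, ENNReal.ofReal (w j) • Measure.dirac ((wmean l (x j), x j i))) ∧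
      (∫⁻ p, ENNReal.ofReal (‖p.1 - p.2‖ ^ 2)
          ∂(∑ j, ENNReal.ofReal (w j) • Measure.dirac ((wmean l (x j), x j i))))
        = W2sq (pihat.map (wmean l)) (μ i) := by
  have hfin : MOT l pihat ≠ ∞ := by
    simp only [MOT_eq_lintegral hl, hrep, lintegral_finsetSum_measure, lintegral_smul_measure,
      lintegral_dirac]
    exact ENNReal.sum_ne_top.2 fun j _ => ENNReal.mul_ne_top ENNReal.ofReal_ne_top
      ENNReal.ofReal_ne_top
  intro i
  have hγ : pihat.map (fun z => (wmean l z, z i))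
      = ∑ j, ENNReal.ofReal (w j) • Measure.dirac ((wmean l (x j), x j i)) := by
    have hmeas : Measurable fun z : Fin N → Pt d => (wmean l z, z i) := by fun_prop
    rw [hrep, Measure.map_finset_sum' hmeas.aemeasurable]
    simp only [Measure.map_smul, Measure.map_dirac' hmeas]
  rw [← hγ]
  exact ⟨isCoupling_map_wmean_eval hplan i,
    lintegral_map_wmean_eval_eq_W2sq hl hplan hfin hopt i⟩

/-- If `π̂ = Σ_j π̂_j δ(x̂_{1,j},…,x̂_{N,j})` is an optimal MOT plan,
`m̂_j = Σ_i λ_i x̂_{i,j}` and `ν̂ = (M_λ)_# π̂`, then for every `i` the measure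
`Σ_j π̂_j δ(m̂_j, x̂_{i,j})` is an optimal coupling between `ν̂` and `μ^i`:
its squared-Euclidean cost equals `W₂²(ν̂, μ^i)`. -/
theorem stmt7 {d N M : ℕ} (μ : Fin N → Measure (Pt d))
    (hμ : ∀ i, IsProbabilityMeasure (μ i) ∧ FinitelySupported (μ i))
    (l : Fin N → ℝ) (hl : InSimplex l)
    (w : Fin M → ℝ) (hw : ∀ j, 0 < w j) (hwsum : ∑ j, w j = 1)
    (x : Fin M → Fin N → Pt d) (hx : Function.Injective x)
    (pihat : Measure (Fin N → Pt d))
    (hrep : pihat = ∑ j, ENNReal.ofReal (w j) • Measure.dirac (x j))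
    (hplan : IsPlan μ pihat)
    (hopt : ∀ π, IsPlan μ π → MOT l pihat ≤ MOT l π) :
    ∀ i : Fin N,
      IsCoupling (pihat.map (wmean l)) (μ i)
        (∑ j, ENNReal.ofReal (w j) • Measure.dirac ((wmean l (x j), x j i))) ∧
      (∫⁻ p, ENNReal.ofReal (‖p.1 - p.2‖ ^ 2)
          ∂(∑ j, ENNReal.ofReal (w j) • Measure.dirac ((wmean l (x j), x j i))))
        = W2sq (pihat.map (wmean l)) (μ i) :=
  stmt7_general μ l hl w x pihat hrep hplan hopt
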